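/- In the duplicated discrete setting: let 𝐋ᵈ : Q⁴ → ℝ be a regular discrete Lagrangian on (Q×Q)² satisfying 𝐋ᵈ ∘ ι̃_d = -𝐋ᵈ where ι̃_d(q₀,q₁,Q₀,Q₁) = (Q₀,Q₁,q₀,q₁). Then the discrete Lagrangian flow F_{𝐋ᵈ} maps the duplicated diagonal ε̃_d(Q×Q) = {(q₀,q₁,q₀,q₁)} into itself. -/

import Mathlib

/-!
The swap `σ(q, Q) = (Q, q)` fixes exactly the diagonal and `𝐋ᵈ(σ x₀, σ x₁) = -𝐋ᵈ(x₀, x₁)`.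
Differentiating this identity at points `x₀, x₁` of the diagonal shows that both partial
derivatives in the discrete Euler–Lagrange equation change sign under precomposition with `σ`,
so if `x₂` solves the equation for `(x₀, x₁)` then so does `σ x₂`. By uniqueness `σ x₂ = x₂`,
i.e. `x₂` lies on the diagonal as well.
-/

/-- Discrete Euler–Lagrange equations on the duplicated configuration space
`Q × Q` (points `x = (q,Q)`): `D₁𝐋ᵈ(x₁,x₂) + D₂𝐋ᵈ(x₀,x₁) = 0`. -/
noncomputable def DEL2 (n : ℕ)
    (Ld : ((Fin n → ℝ) × (Fin n → ℝ)) × ((Fin n → ℝ) × (Fin n → ℝ)) → ℝ)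
    (x0 x1 x2 : (Fin n → ℝ) × (Fin n → ℝ)) : Prop :=
  fderiv ℝ (fun x => Ld (x, x2)) x1 + fderiv ℝ (fun y => Ld (x0, y)) x1 = 0

section AntiInvariant

variable {E : Type*} [NormedAddCommGroup E] [NormedSpace ℝ E] (σ : E ≃L[ℝ] E)

theorem fderiv_comp_eq_neg_of_comp_eq_neg {f g : E → ℝ} (h : ∀ x, g (σ x) = -f x) (x : E) :
    (fderiv ℝ g (σ x)).comp (σ : E →L[ℝ] E) = -fderiv ℝ f x := by
  rw [← σ.comp_right_fderiv, show g ∘ σ = fun x => -f x from funext h, fderiv_fun_neg]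

theorem ContinuousLinearMap.eq_zero_of_comp_equiv_eq_zero {F : Type*} [NormedAddCommGroup F]
    [NormedSpace ℝ F] {T : E →L[ℝ] F} (h : T.comp (σ : E →L[ℝ] E) = 0) : T = 0 := by
  ext v
  simpa using congrArg (fun S : E →L[ℝ] F => S (σ.symm v)) h

theorem discreteEulerLagrange_apply_of_anti_invariant {L : E × E → ℝ}
    (hL : ∀ a b, L (σ a, σ b) = -L (a, b)) {x₀ x₁ x₂ : E} (h₀ : σ x₀ = x₀) (h₁ : σ x₁ = x₁)
    (hEL : fderiv ℝ (fun x => L (x, x₂)) x₁ + fderiv ℝ (fun y => L (x₀, y)) x₁ = 0) :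
    fderiv ℝ (fun x => L (x, σ x₂)) x₁ + fderiv ℝ (fun y => L (x₀, y)) x₁ = 0 := by
  have hD₁ : (fderiv ℝ (fun x => L (x, σ x₂)) x₁).comp (σ : E →L[ℝ] E) =
      -fderiv ℝ (fun x => L (x, x₂)) x₁ := by
    simpa only [h₁] using fderiv_comp_eq_neg_of_comp_eq_neg σ (fun x => hL x x₂) x₁
  have hD₂ : (fderiv ℝ (fun y => L (x₀, y)) x₁).comp (σ : E →L[ℝ] E) =
      -fderiv ℝ (fun y => L (x₀, y)) x₁ := by
    simpa only [h₁] using fderiv_comp_eq_neg_of_comp_eq_neg σ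
      (g := fun y => L (x₀, y)) (fun y => by simpa only [h₀] using hL x₀ y) x₁
  refine ContinuousLinearMap.eq_zero_of_comp_equiv_eq_zero σ ?_
  rw [ContinuousLinearMap.add_comp, hD₁, hD₂, ← neg_add, hEL, neg_zero]

end AntiInvariant

theorem prodComm_eq_self_iff {R M : Type*} [Semiring R] [AddCommMonoid M] [Module R M]
    [TopologicalSpace M] {x : M × M} :
    ContinuousLinearEquiv.prodComm R M M x = x ↔ x.1 = x.2 := by
  simp only [ContinuousLinearEquiv.prodComm_apply, Prod.ext_iff, Prod.fst_swap, Prod.snd_swap]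
  exact ⟨fun h => h.2, fun h => ⟨h.symm, h⟩⟩

theorem stmt_12_general (n : ℕ)
    (Ld : ((Fin n → ℝ) × (Fin n → ℝ)) × ((Fin n → ℝ) × (Fin n → ℝ)) → ℝ)
    (hanti : ∀ x0 x1 : (Fin n → ℝ) × (Fin n → ℝ),
      Ld ((x0.2, x0.1), (x1.2, x1.1)) = -Ld (x0, x1))
    (F : ((Fin n → ℝ) × (Fin n → ℝ)) × ((Fin n → ℝ) × (Fin n → ℝ)) →
         ((Fin n → ℝ) × (Fin n → ℝ)) × ((Fin n → ℝ) × (Fin n → ℝ)))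
    (hF1 : ∀ z, (F z).1 = z.2)
    (hF2 : ∀ z, DEL2 n Ld z.1 z.2 (F z).2)
    (huniq : ∀ x0 x1 x2 x2' : (Fin n → ℝ) × (Fin n → ℝ),
      DEL2 n Ld x0 x1 x2 → DEL2 n Ld x0 x1 x2' → x2 = x2') :
    ∀ z : ((Fin n → ℝ) × (Fin n → ℝ)) × ((Fin n → ℝ) × (Fin n → ℝ)),
      z.1.1 = z.1.2 → z.2.1 = z.2.2 →
      (F z).1.1 = (F z).1.2 ∧ (F z).2.1 = (F z).2.2 := by
  intro z h₀ h₁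
  let σ := ContinuousLinearEquiv.prodComm ℝ (Fin n → ℝ) (Fin n → ℝ)
  have hfix : ∀ x, σ x = x ↔ x.1 = x.2 := fun _ => prodComm_eq_self_iff
  have hEL : DEL2 n Ld z.1 z.2 (σ (F z).2) :=
    discreteEulerLagrange_apply_of_anti_invariant σ hanti ((hfix _).2 h₀) ((hfix _).2 h₁) (hF2 z)
  exact ⟨hF1 z ▸ h₁, (hfix _).1 (huniq _ _ _ _ hEL (hF2 z))⟩

/-- If the regular duplicated discrete Lagrangian `𝐋ᵈ` satisfies
`𝐋ᵈ ∘ ι̃_d = -𝐋ᵈ` for the swap `ι̃_d(q₀,q₁,Q₀,Q₁) = (Q₀,Q₁,q₀,q₁)`, then the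
discrete Lagrangian flow `F` maps the duplicated diagonal
`{(q₀,q₁,q₀,q₁)}` into itself. -/
theorem stmt_12 (n : ℕ)
    (Ld : ((Fin n → ℝ) × (Fin n → ℝ)) × ((Fin n → ℝ) × (Fin n → ℝ)) → ℝ)
    (hLd : Differentiable ℝ Ld)
    (hanti : ∀ x0 x1 : (Fin n → ℝ) × (Fin n → ℝ),
      Ld ((x0.2, x0.1), (x1.2, x1.1)) = -Ld (x0, x1))
    (F : ((Fin n → ℝ) × (Fin n → ℝ)) × ((Fin n → ℝ) × (Fin n → ℝ)) →
         ((Fin n → ℝ) × (Fin n → ℝ)) × ((Fin n → ℝ) × (Fin n → ℝ)))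
    (hF1 : ∀ z, (F z).1 = z.2)
    (hF2 : ∀ z, DEL2 n Ld z.1 z.2 (F z).2)
    (huniq : ∀ x0 x1 x2 x2' : (Fin n → ℝ) × (Fin n → ℝ),
      DEL2 n Ld x0 x1 x2 → DEL2 n Ld x0 x1 x2' → x2 = x2') :
    ∀ z : ((Fin n → ℝ) × (Fin n → ℝ)) × ((Fin n → ℝ) × (Fin n → ℝ)),
      z.1.1 = z.1.2 → z.2.1 = z.2.2 →
      (F z).1.1 = (F z).1.2 ∧ (F z).2.1 = (F z).2.2 :=
  stmt_12_general n Ld hanti F hF1 hF2 huniq
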